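/- arXiv:2309.03090 — 5 statements merged into one kernel-verified Lean document; each statement's English description precedes it below -/
import Mathlib

section
/- For K_s > 0, let q_s = (4K_s + K_s²)^{1/4} and α_s = √2/√(2 + K_s - q_s²). Then α_s > 1, and q_s is the unique point in (√K_s, √(K_s+4)) where k''(q) = 0, with k'(q_s) = α_s. -/
/-!
On the band `√K < q < √(K + 4)` the dispersion relation has derivative
`k'(q) = 2q / √((q² - K)(K + 4 - q²))`, and differentiating once more gives
`k''(q) = 2(q⁴ - (4K + K²)) / ((q² - K)(K + 4 - q²))^{3/2}`.
So `k''` vanishes exactly where `q⁴ = 4K + K²`, i.e. at `q_s`. At that point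
`(q² - K)(K + 4 - q²) = 2q²(2 + K - q²)`, which turns `k'(q_s)` into `α_s`, and
`K < q_s² < K + 2` gives both the band membership and `α_s > 1`.
-/

open Real Set

noncomputable section

/-- The paper's `k(q)`, with `K` standing for `K_s`. -/
def pinnedDispersion (K q : ℝ) : ℝ := 2 * arcsin (√(q ^ 2 - K) / 2)

def groupVelocity (K q : ℝ) : ℝ := 2 * q / √((q ^ 2 - K) * (4 + K - q ^ 2))

end

lemma mem_Ioo_sqrt_iff {K q : ℝ} :
    q ∈ Ioo (√K) (√(K + 4)) ↔ 0 < q ∧ K < q ^ 2 ∧ q ^ 2 < K + 4 := by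
  constructor
  · rintro ⟨hlow, hup⟩
    have hq : 0 < q := (sqrt_nonneg K).trans_lt hlow
    exact ⟨hq, (sqrt_lt' hq).1 hlow, (lt_sqrt hq.le).1 hup⟩
  · rintro ⟨hq, hlow, hup⟩
    exact ⟨(sqrt_lt' hq).2 hlow, (lt_sqrt hq.le).2 hup⟩

lemma eq_rpow_one_div_four_iff {x y : ℝ} (hx : 0 ≤ x) (hy : 0 ≤ y) :
    x = y ^ ((1 : ℝ) / 4) ↔ x ^ 4 = y := by
  rw [one_div, eq_rpow_inv hx hy (by norm_num)]
  norm_cast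

lemma hasDerivAt_pinnedDispersion {K q : ℝ} (hlow : K < q ^ 2) (hup : q ^ 2 < K + 4) :
    HasDerivAt (pinnedDispersion K) (groupVelocity K q) q := by
  have hu : 0 < q ^ 2 - K := by linarith
  have hv : 0 < 4 + K - q ^ 2 := by linarith
  have hsqrt4 : √4 = 2 := by
    rw [show (4 : ℝ) = 2 ^ 2 by norm_num, sqrt_sq zero_le_two]
  have hx_lt : √(q ^ 2 - K) / 2 < 1 := by
    have : √(q ^ 2 - K) < √4 := sqrt_lt_sqrt hu.le (by linarith)
    rw [hsqrt4] at this
    linarith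
  have hx_gt : -1 < √(q ^ 2 - K) / 2 := by linarith [sqrt_nonneg (q ^ 2 - K)]
  have hinner : HasDerivAt (fun q : ℝ => √(q ^ 2 - K) / 2)
      (2 * q / (2 * √(q ^ 2 - K)) / 2) q :=
    ((((hasDerivAt_pow 2 q).sub_const K).sqrt hu.ne').div_const 2).congr_deriv (by ring)
  refine (((hasDerivAt_arcsin hx_gt.ne' hx_lt.ne).comp q hinner).const_mul 2).congr_deriv ?_
  have hcos : √(1 - (√(q ^ 2 - K) / 2) ^ 2) = √(4 + K - q ^ 2) / 2 := by
    rw [div_pow, sq_sqrt hu.le, ← hsqrt4, ← sqrt_div hv.le, hsqrt4]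
    congr 1
    ring
  have hsu : 0 < √(q ^ 2 - K) := sqrt_pos.2 hu
  have hsv : 0 < √(4 + K - q ^ 2) := sqrt_pos.2 hv
  rw [hcos, groupVelocity, sqrt_mul hu.le]
  field_simp

lemma deriv_pinnedDispersion_eqOn (K : ℝ) :
    EqOn (deriv (pinnedDispersion K)) (groupVelocity K) (Ioo (√K) (√(K + 4))) := by
  intro q hq
  obtain ⟨-, hlow, hup⟩ := mem_Ioo_sqrt_iff.1 hq
  exact (hasDerivAt_pinnedDispersion hlow hup).deriv

lemma hasDerivAt_groupVelocity {K q : ℝ} (hlow : K < q ^ 2) (hup : q ^ 2 < K + 4) :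
    HasDerivAt (groupVelocity K)
      (2 * (q ^ 4 - (4 * K + K ^ 2)) / √((q ^ 2 - K) * (4 + K - q ^ 2)) ^ 3) q := by
  have hg : 0 < (q ^ 2 - K) * (4 + K - q ^ 2) := mul_pos (by linarith) (by linarith)
  have hs : 0 < √((q ^ 2 - K) * (4 + K - q ^ 2)) := sqrt_pos.2 hg
  have hs2 := sq_sqrt hg.le
  have hprod : HasDerivAt (fun q : ℝ => (q ^ 2 - K) * (4 + K - q ^ 2))
      (2 * q * (4 + K - q ^ 2) + (q ^ 2 - K) * -(2 * q)) q := by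
    have h1 := (hasDerivAt_pow 2 q).sub_const K
    have h2 := (hasDerivAt_pow 2 q).const_sub (4 + K)
    exact (h1.mul h2).congr_deriv (by ring)
  have hquot := ((hasDerivAt_id' q).const_mul 2).div (hprod.sqrt hg.ne') hs.ne'
  refine hquot.congr_deriv ?_
  rw [div_eq_div_iff (by positivity) (by positivity)]
  field_simp
  linear_combination hs2

lemma deriv_deriv_pinnedDispersion {K q : ℝ} (hq : q ∈ Ioo (√K) (√(K + 4))) :
    deriv (deriv (pinnedDispersion K)) q
      = 2 * (q ^ 4 - (4 * K + K ^ 2)) / √((q ^ 2 - K) * (4 + K - q ^ 2)) ^ 3 := by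
  obtain ⟨-, hlow, hup⟩ := mem_Ioo_sqrt_iff.1 hq
  have hev : deriv (pinnedDispersion K) =ᶠ[nhds q] groupVelocity K :=
    Filter.eventuallyEq_of_mem (isOpen_Ioo.mem_nhds hq) (deriv_pinnedDispersion_eqOn K)
  rw [hev.deriv_eq]
  exact (hasDerivAt_groupVelocity hlow hup).deriv

lemma deriv_deriv_pinnedDispersion_eq_zero_iff {K q : ℝ} (hq : q ∈ Ioo (√K) (√(K + 4))) :
    deriv (deriv (pinnedDispersion K)) q = 0 ↔ q ^ 4 = 4 * K + K ^ 2 := by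
  obtain ⟨-, hlow, hup⟩ := mem_Ioo_sqrt_iff.1 hq
  have hg : 0 < (q ^ 2 - K) * (4 + K - q ^ 2) := mul_pos (by linarith) (by linarith)
  have hden : √((q ^ 2 - K) * (4 + K - q ^ 2)) ^ 3 ≠ 0 := by positivity
  rw [deriv_deriv_pinnedDispersion hq, div_eq_zero_iff, or_iff_left hden]
  constructor <;> intro h <;> linarith

lemma sq_bounds_of_pow_four_eq {K q : ℝ} (hK : 0 < K)
    (hq4 : q ^ 4 = 4 * K + K ^ 2) : K < q ^ 2 ∧ q ^ 2 < K + 2 := by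
  constructor <;> nlinarith [sq_nonneg (q ^ 2 - K), sq_nonneg (q ^ 2 - K - 2), sq_nonneg q]

lemma groupVelocity_of_pow_four_eq {K q : ℝ} (hq : 0 < q) (hq4 : q ^ 4 = 4 * K + K ^ 2)
    (hup : q ^ 2 < K + 2) : groupVelocity K q = √2 / √(2 + K - q ^ 2) := by
  have hc : 0 < 2 + K - q ^ 2 := by linarith
  have hfactor : (q ^ 2 - K) * (4 + K - q ^ 2) = 2 * q ^ 2 * (2 + K - q ^ 2) := by
    linear_combination hq4
  have hsqrt2 : √2 ^ 2 = 2 := sq_sqrt zero_le_two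
  have hs2 : 0 < √2 := by positivity
  have hsc : 0 < √(2 + K - q ^ 2) := sqrt_pos.2 hc
  rw [groupVelocity, hfactor, sqrt_mul (by positivity), sqrt_mul zero_le_two, sqrt_sq hq.le,
    div_eq_div_iff (by positivity) (by positivity)]
  linear_combination (-q * √(2 + K - q ^ 2)) * hsqrt2

theorem front_point_properties (Ks : ℝ) (hKs : 0 < Ks) :
    ∀ qs αs : ℝ, qs = (4 * Ks + Ks ^ 2) ^ ((1:ℝ) / 4) →
      αs = Real.sqrt 2 / Real.sqrt (2 + Ks - qs ^ 2) →
    (1 < αs ∧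
     Real.sqrt Ks < qs ∧ qs < Real.sqrt (Ks + 4) ∧
     deriv (fun q => 2 * Real.arcsin (Real.sqrt (q ^ 2 - Ks) / 2)) qs = αs ∧
     (∀ q : ℝ, Real.sqrt Ks < q → q < Real.sqrt (Ks + 4) →
       (deriv (deriv (fun q => 2 * Real.arcsin (Real.sqrt (q ^ 2 - Ks) / 2))) q = 0 ↔
         q = qs))) := by
  intro qs αs hqs hαs
  change 1 < αs ∧ √Ks < qs ∧ qs < √(Ks + 4) ∧ deriv (pinnedDispersion Ks) qs = αs ∧
    ∀ q : ℝ, √Ks < q → q < √(Ks + 4) → (deriv (deriv (pinnedDispersion Ks)) q = 0 ↔ q = qs)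
  have hc : 0 ≤ 4 * Ks + Ks ^ 2 := by positivity
  have hqs_pos : 0 < qs := hqs ▸ rpow_pos_of_pos (by positivity) _
  have hqs4 : qs ^ 4 = 4 * Ks + Ks ^ 2 := (eq_rpow_one_div_four_iff hqs_pos.le hc).1 hqs
  obtain ⟨hlow, hup⟩ := sq_bounds_of_pow_four_eq hKs hqs4
  have hmem : qs ∈ Ioo (√Ks) (√(Ks + 4)) := mem_Ioo_sqrt_iff.2 ⟨hqs_pos, hlow, by linarith⟩
  refine ⟨?_, hmem.1, hmem.2, ?_, fun q hq₁ hq₂ => ?_⟩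
  · rw [hαs, one_lt_div (sqrt_pos.2 (by linarith))]
    exact sqrt_lt_sqrt (by linarith) (by linarith)
  · rw [deriv_pinnedDispersion_eqOn Ks hmem, hαs]
    exact groupVelocity_of_pow_four_eq hqs_pos hqs4 hup
  · have hq : q ∈ Ioo (√Ks) (√(Ks + 4)) := ⟨hq₁, hq₂⟩
    rw [deriv_deriv_pinnedDispersion_eq_zero_iff hq, hqs,
      eq_rpow_one_div_four_iff (mem_Ioo_sqrt_iff.1 hq).1.le hc]
end

section
/- For K_s > 0 and α > α_s = √2/√(2 + K_s - q_s²) with q_s = (4K_s + K_s²)^{1/4}, the two numbers q_α^± defined by (q_α^±)² = (2/α²)·[(1 + K_s/2)α² - 1 ± √(α⁴ - (2+K_s)α² + 1)] are real, and satisfy k'(q_α^±) = α with q_α^+ ∈ (q_s, √(4+K_s)) and q_α^- ∈ (√K_s, q_s). -/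
set_option maxHeartbeats 2000000 in
theorem stationary_points_pinned (Ks α : ℝ) (hKs : 0 < Ks)
    (hα : Real.sqrt 2 / Real.sqrt (2 + Ks - ((4 * Ks + Ks ^ 2) ^ ((1:ℝ) / 4)) ^ 2) < α) :
    ∀ qs qp qm : ℝ, qs = (4 * Ks + Ks ^ 2) ^ ((1:ℝ) / 4) →
      qp = Real.sqrt ((2 / α ^ 2) * ((1 + Ks / 2) * α ^ 2 - 1 +
            Real.sqrt (α ^ 4 - (2 + Ks) * α ^ 2 + 1))) →
      qm = Real.sqrt ((2 / α ^ 2) * ((1 + Ks / 2) * α ^ 2 - 1 -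
            Real.sqrt (α ^ 4 - (2 + Ks) * α ^ 2 + 1))) →
    (0 ≤ α ^ 4 - (2 + Ks) * α ^ 2 + 1 ∧
     2 * qp / (Real.sqrt (qp ^ 2 - Ks) * Real.sqrt (4 + Ks - qp ^ 2)) = α ∧
     2 * qm / (Real.sqrt (qm ^ 2 - Ks) * Real.sqrt (4 + Ks - qm ^ 2)) = α ∧
     qs < qp ∧ qp < Real.sqrt (4 + Ks) ∧
     Real.sqrt Ks < qm ∧ qm < qs) := by
  intro qs qp qm hqs hqp hqm
  have hb : (0:ℝ) < 4 * Ks + Ks ^ 2 := by nlinarith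
  have hqs_pos : 0 < qs := by rw [hqs]; exact Real.rpow_pos_of_pos hb _
  have hu4 : (qs ^ 2) ^ 2 = 4 * Ks + Ks ^ 2 := by
    rw [hqs, ← Real.rpow_natCast ((4 * Ks + Ks ^ 2) ^ ((1:ℝ)/4)) 2,
        ← Real.rpow_mul hb.le]
    rw [← Real.rpow_natCast ((4 * Ks + Ks ^ 2) ^ ((1:ℝ)/4 * (2:ℕ))) 2,
        ← Real.rpow_mul hb.le]
    norm_num
  rw [← hqs] at hα
  have hu0 : 0 < qs ^ 2 := by positivity
  have huKs : Ks < qs ^ 2 := by nlinarith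
  have hcu : qs ^ 2 < 2 + Ks := by nlinarith
  have hcpos : 0 < 2 + Ks - qs ^ 2 := by linarith
  have hα0 : 0 < α := lt_trans (by positivity) hα
  have hα2 : (0:ℝ) < α ^ 2 := by positivity
  have ht : 2 < α ^ 2 * (2 + Ks - qs ^ 2) := by
    rw [div_lt_iff₀ (Real.sqrt_pos.mpr hcpos)] at hα
    have h2 : (Real.sqrt 2) ^ 2 = 2 := Real.sq_sqrt (by norm_num)
    have hc2 : (Real.sqrt (2 + Ks - qs ^ 2)) ^ 2 = 2 + Ks - qs ^ 2 :=
      Real.sq_sqrt hcpos.le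
    nlinarith [Real.sqrt_nonneg 2, Real.sqrt_nonneg (2 + Ks - qs ^ 2)]
  have ht1 : 1 < α ^ 2 := by nlinarith
  have h2t : 2 + Ks + qs ^ 2 < 2 * α ^ 2 := by nlinarith
  have hD : 0 < α ^ 4 - (2 + Ks) * α ^ 2 + 1 := by
    nlinarith [mul_pos (show (0:ℝ) < 2*α^2 - (2+Ks) - qs^2 by linarith)
      (show (0:ℝ) < 2*α^2 - (2+Ks) + qs^2 by linarith)]
  set s := Real.sqrt (α ^ 4 - (2 + Ks) * α ^ 2 + 1) with hs
  have hs0 : 0 ≤ s := Real.sqrt_nonneg _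
  have hs2 : s ^ 2 = α ^ 4 - (2 + Ks) * α ^ 2 + 1 := Real.sq_sqrt hD.le
  have hst : s < α ^ 2 - 1 := by
    have h1 : s ^ 2 < (α ^ 2 - 1) ^ 2 := by nlinarith
    exact lt_of_pow_lt_pow_left₀ 2 (by linarith) h1
  have hst2 : s < α ^ 2 + 1 := by
    have h1 : s ^ 2 < (α ^ 2 + 1) ^ 2 := by nlinarith
    exact lt_of_pow_lt_pow_left₀ 2 (by linarith) h1
  have hKα : 0 < Ks * α ^ 2 := mul_pos hKs hα2
  have hBm : 0 < (1 + Ks / 2) * α ^ 2 - 1 - s := by nlinarith [hst, hKα]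
  have hBp : 0 < (1 + Ks / 2) * α ^ 2 - 1 + s := by nlinarith [hs0, ht1, hKα]
  have hAm : 0 < (2 / α ^ 2) * ((1 + Ks / 2) * α ^ 2 - 1 - s) := by positivity
  have hAp : 0 < (2 / α ^ 2) * ((1 + Ks / 2) * α ^ 2 - 1 + s) := by positivity
  have hqp0 : 0 ≤ qp := by rw [hqp]; exact Real.sqrt_nonneg _
  have hqm0 : 0 ≤ qm := by rw [hqm]; exact Real.sqrt_nonneg _
  have hqp2 : qp ^ 2 = (2 / α ^ 2) * ((1 + Ks / 2) * α ^ 2 - 1 + s) := by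
    rw [hqp]; exact Real.sq_sqrt hAp.le
  have hqm2 : qm ^ 2 = (2 / α ^ 2) * ((1 + Ks / 2) * α ^ 2 - 1 - s) := by
    rw [hqm]; exact Real.sq_sqrt hAm.le
  have htp : α ^ 2 * qp ^ 2 = (2 + Ks) * α ^ 2 - 2 + 2 * s := by
    rw [hqp2]; field_simp
  have htm : α ^ 2 * qm ^ 2 = (2 + Ks) * α ^ 2 - 2 - 2 * s := by
    rw [hqm2]; field_simp
  -- bounds on squares
  have hqp_lt : qp ^ 2 < 4 + Ks := by nlinarith
  have hqm_gt : Ks < qm ^ 2 := by nlinarith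
  have hqp_gt : qs ^ 2 < qp ^ 2 := by nlinarith
  have hqm_lt : qm ^ 2 < qs ^ 2 := by
    have hX : 0 < (2 + Ks - qs ^ 2) * α ^ 2 - 2 := by nlinarith
    have key : (2 * s) ^ 2 - ((2 + Ks - qs ^ 2) * α ^ 2 - 2) ^ 2 =
        2 * (α ^ 2 * qs ^ 2) * ((2 + Ks - qs ^ 2) * α ^ 2 - 2) := by
      linear_combination 4 * hs2 + α ^ 2 * α ^ 2 * hu4
    have h4s : ((2 + Ks - qs ^ 2) * α ^ 2 - 2) ^ 2 < (2 * s) ^ 2 := by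
      nlinarith [mul_pos (mul_pos hα2 hu0) hX]
    have h2s : (2 + Ks - qs ^ 2) * α ^ 2 - 2 < 2 * s :=
      lt_of_pow_lt_pow_left₀ 2 (by positivity) h4s
    nlinarith
  -- stationary point identities
  have hidp : 4 * qp ^ 2 = α ^ 2 * (qp ^ 2 - Ks) * (4 + Ks - qp ^ 2) := by
    have h2 : α ^ 2 * α ^ 2 * (4 * qp ^ 2) =
        α ^ 2 * α ^ 2 * (α ^ 2 * (qp ^ 2 - Ks) * (4 + Ks - qp ^ 2)) := by
      linear_combination (α ^ 2 * (α ^ 2 * qp ^ 2 + ((2 + Ks) * α ^ 2 - 2 + 2 * s)) +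
        4 * α ^ 2 - (4 + 2 * Ks) * α ^ 2 * α ^ 2) * htp + (4 * α ^ 2) * hs2
    exact mul_left_cancel₀ (by positivity) h2
  have hidm : 4 * qm ^ 2 = α ^ 2 * (qm ^ 2 - Ks) * (4 + Ks - qm ^ 2) := by
    have h2 : α ^ 2 * α ^ 2 * (4 * qm ^ 2) =
        α ^ 2 * α ^ 2 * (α ^ 2 * (qm ^ 2 - Ks) * (4 + Ks - qm ^ 2)) := by
      linear_combination (α ^ 2 * (α ^ 2 * qm ^ 2 + ((2 + Ks) * α ^ 2 - 2 - 2 * s)) +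
        4 * α ^ 2 - (4 + 2 * Ks) * α ^ 2 * α ^ 2) * htm + (4 * α ^ 2) * hs2
    exact mul_left_cancel₀ (by positivity) h2
  have hfin : ∀ q : ℝ, 0 ≤ q → Ks < q ^ 2 → q ^ 2 < 4 + Ks →
      4 * q ^ 2 = α ^ 2 * (q ^ 2 - Ks) * (4 + Ks - q ^ 2) →
      2 * q / (Real.sqrt (q ^ 2 - Ks) * Real.sqrt (4 + Ks - q ^ 2)) = α := by
    intro q hq0 h1 h2 hid
    have ha : 0 < Real.sqrt (q ^ 2 - Ks) := Real.sqrt_pos.mpr (by linarith)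
    have hb' : 0 < Real.sqrt (4 + Ks - q ^ 2) := Real.sqrt_pos.mpr (by linarith)
    rw [div_eq_iff (by positivity)]
    have hsq : (2 * q) ^ 2 =
        (α * (Real.sqrt (q ^ 2 - Ks) * Real.sqrt (4 + Ks - q ^ 2))) ^ 2 := by
      have e1 : Real.sqrt (q ^ 2 - Ks) ^ 2 = q ^ 2 - Ks :=
        Real.sq_sqrt (by linarith)
      have e2 : Real.sqrt (4 + Ks - q ^ 2) ^ 2 = 4 + Ks - q ^ 2 :=
        Real.sq_sqrt (by linarith)
      linear_combination hid - α ^ 2 * (4 + Ks - q ^ 2) * e1 -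
        α ^ 2 * Real.sqrt (q ^ 2 - Ks) ^ 2 * e2
    calc 2 * q = Real.sqrt ((2 * q) ^ 2) := (Real.sqrt_sq (by positivity)).symm
      _ = Real.sqrt ((α * (Real.sqrt (q ^ 2 - Ks) * Real.sqrt (4 + Ks - q ^ 2))) ^ 2) := by
          rw [hsq]
      _ = α * (Real.sqrt (q ^ 2 - Ks) * Real.sqrt (4 + Ks - q ^ 2)) :=
          Real.sqrt_sq (by positivity)
  refine ⟨hD.le, hfin qp hqp0 (by linarith) hqp_lt hidp,
    hfin qm hqm0 hqm_gt (by linarith) hidm, ?_, ?_, ?_, ?_⟩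
  · exact lt_of_pow_lt_pow_left₀ 2 hqp0 hqp_gt
  · refine lt_of_pow_lt_pow_left₀ 2 (Real.sqrt_nonneg _) ?_
    rw [Real.sq_sqrt (by linarith : (0:ℝ) ≤ 4 + Ks)]; exact hqp_lt
  · refine lt_of_pow_lt_pow_left₀ 2 hqm0 ?_
    rw [Real.sq_sqrt hKs.le]; exact hqm_gt
  · exact lt_of_pow_lt_pow_left₀ 2 hqs_pos.le hqm_lt
end

section
/- For K_s > 0, α > α_s, and q = q_α^± satisfying k'(q) = α, one has k''(q) = α³·(q⁴ - q_s⁴)/(4q³), which is positive for q = q_α^+ and negative for q = q_α^-. -/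
set_option maxHeartbeats 1600000 in
theorem second_deriv_stationary_pinned (Ks α q : ℝ) (hKs : 0 < Ks)
    (hα : Real.sqrt 2 / Real.sqrt (2 + Ks - ((4 * Ks + Ks ^ 2) ^ ((1:ℝ) / 4)) ^ 2) < α)
    (hq : q ^ 2 = (2 / α ^ 2) * ((1 + Ks / 2) * α ^ 2 - 1 +
            Real.sqrt (α ^ 4 - (2 + Ks) * α ^ 2 + 1)) ∨
          q ^ 2 = (2 / α ^ 2) * ((1 + Ks / 2) * α ^ 2 - 1 -
            Real.sqrt (α ^ 4 - (2 + Ks) * α ^ 2 + 1)))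
    (hqpos : 0 < q)
    (hk' : 2 * q / (Real.sqrt (q ^ 2 - Ks) * Real.sqrt (4 + Ks - q ^ 2)) = α) :
    ∀ qs : ℝ, qs = (4 * Ks + Ks ^ 2) ^ ((1:ℝ) / 4) →
    (2 * (q ^ 4 - qs ^ 4) / ((q ^ 2 - Ks) ^ ((3:ℝ) / 2) * (4 + Ks - q ^ 2) ^ ((3:ℝ) / 2))
        = α ^ 3 * (q ^ 4 - qs ^ 4) / (4 * q ^ 3) ∧
     (q ^ 2 = (2 / α ^ 2) * ((1 + Ks / 2) * α ^ 2 - 1 +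
          Real.sqrt (α ^ 4 - (2 + Ks) * α ^ 2 + 1)) →
        0 < α ^ 3 * (q ^ 4 - qs ^ 4) / (4 * q ^ 3)) ∧
     (q ^ 2 = (2 / α ^ 2) * ((1 + Ks / 2) * α ^ 2 - 1 -
          Real.sqrt (α ^ 4 - (2 + Ks) * α ^ 2 + 1)) →
        α ^ 3 * (q ^ 4 - qs ^ 4) / (4 * q ^ 3) < 0)) := by
  intro qs hqs
  subst hqs
  have hDpos : (0:ℝ) < 4 * Ks + Ks ^ 2 := by positivity
  have hα0 : 0 < α := lt_of_le_of_lt (by positivity) hα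
  have hqs2 : (((4 * Ks + Ks ^ 2):ℝ) ^ ((1:ℝ)/4)) ^ 2 = Real.sqrt (4 * Ks + Ks ^ 2) := by
    rw [Real.sqrt_eq_rpow, ← Real.rpow_natCast (((4 * Ks + Ks ^ 2):ℝ) ^ ((1:ℝ)/4)) 2,
      ← Real.rpow_mul hDpos.le]
    norm_num
  have hqs4 : (((4 * Ks + Ks ^ 2):ℝ) ^ ((1:ℝ)/4)) ^ 4 = 4 * Ks + Ks ^ 2 := by
    rw [← Real.rpow_natCast (((4 * Ks + Ks ^ 2):ℝ) ^ ((1:ℝ)/4)) 4,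
      ← Real.rpow_mul hDpos.le]
    norm_num
  set E := Real.sqrt (4 * Ks + Ks ^ 2) with hE
  have hE0 : 0 ≤ E := Real.sqrt_nonneg _
  have hE2 : E ^ 2 = 4 * Ks + Ks ^ 2 := Real.sq_sqrt hDpos.le
  have hd : 0 < 2 + Ks - E := by nlinarith [hE2, hE0, sq_nonneg (E - (2 + Ks))]
  rw [hqs2] at hα
  have h2 : Real.sqrt 2 < α * Real.sqrt (2 + Ks - E) := by
    rwa [div_lt_iff₀ (Real.sqrt_pos.mpr hd)] at hα
  have hα2 : 2 < α ^ 2 * (2 + Ks - E) := by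
    nlinarith [Real.sq_sqrt (by norm_num : (0:ℝ) ≤ 2), Real.sq_sqrt hd.le,
      Real.sqrt_nonneg 2, Real.sqrt_nonneg (2 + Ks - E), h2]
  have hR1 : 0 < (2 + Ks) * α ^ 2 - α ^ 2 * E - 2 := by nlinarith [hα2]
  have hR2 : 0 < (2 + Ks) * α ^ 2 + α ^ 2 * E - 2 := by
    nlinarith [hR1, mul_nonneg (sq_nonneg α) hE0]
  have hE2' : α ^ 4 * E ^ 2 = α ^ 4 * (4 * Ks + Ks ^ 2) := by rw [hE2]
  have hdisc : 0 < α ^ 4 - (2 + Ks) * α ^ 2 + 1 := by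
    nlinarith [mul_pos hR1 hR2, hE2']
  set s := Real.sqrt (α ^ 4 - (2 + Ks) * α ^ 2 + 1) with hs
  have hs0 : 0 < s := Real.sqrt_pos.mpr hdisc
  have hs2 : s ^ 2 = α ^ 4 - (2 + Ks) * α ^ 2 + 1 := Real.sq_sqrt hdisc.le
  set a := Real.sqrt (q ^ 2 - Ks) with ha
  set b := Real.sqrt (4 + Ks - q ^ 2) with hb
  have ha0' : 0 ≤ a := Real.sqrt_nonneg _
  have hb0' : 0 ≤ b := Real.sqrt_nonneg _
  have hab : 0 < a * b := by
    rcases lt_or_eq_of_le (mul_nonneg ha0' hb0') with h | h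
    · exact h
    · rw [← h, div_zero] at hk'; linarith
  have ha0 : 0 < a := by nlinarith [hab, ha0', hb0']
  have hb0 : 0 < b := by nlinarith [hab, ha0', hb0']
  have hA : 0 < q ^ 2 - Ks := Real.sqrt_pos.mp (ha ▸ ha0)
  have hB : 0 < 4 + Ks - q ^ 2 := Real.sqrt_pos.mp (hb ▸ hb0)
  have key : 2 * q = α * (a * b) := by
    rw [← hk', div_mul_cancel₀ _ hab.ne']
  have key3 : α ^ 3 * (a ^ 3 * b ^ 3) = 8 * q ^ 3 := by
    linear_combination (-(α ^ 2 * a ^ 2 * b ^ 2 + 2 * q * α * a * b + 4 * q ^ 2)) * key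
  have hA32 : (q ^ 2 - Ks) ^ ((3:ℝ)/2) = a ^ 3 := by
    rw [ha, Real.sqrt_eq_rpow, ← Real.rpow_natCast ((q ^ 2 - Ks) ^ ((1:ℝ)/2)) 3,
      ← Real.rpow_mul hA.le]
    norm_num
  have hB32 : (4 + Ks - q ^ 2) ^ ((3:ℝ)/2) = b ^ 3 := by
    rw [hb, Real.sqrt_eq_rpow, ← Real.rpow_natCast ((4 + Ks - q ^ 2) ^ ((1:ℝ)/2)) 3,
      ← Real.rpow_mul hB.le]
    norm_num
  have hq3 : (0:ℝ) < 4 * q ^ 3 := by positivity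
  refine ⟨?_, ?_, ?_⟩
  · rw [hA32, hB32, hqs4]
    field_simp
    linear_combination (-(q ^ 4 - (4 * Ks + Ks ^ 2))) * key3
  · intro hqp
    have hqp' : α ^ 2 * q ^ 2 = 2 * ((1 + Ks / 2) * α ^ 2 - 1 + s) := by
      field_simp at hqp
      linarith [hqp]
    have hnum : α ^ 4 * (q ^ 4 - (4 * Ks + Ks ^ 2)) = 4 * s * (α ^ 2 * q ^ 2) := by
      linear_combination (α ^ 2 * q ^ 2 + 2 * ((1 + Ks / 2) * α ^ 2 - 1 + s) - 4 * s) * hqp'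
        - 4 * hs2
    have hpos : 0 < q ^ 4 - (4 * Ks + Ks ^ 2) := by
      nlinarith [hnum, mul_pos hs0 (mul_pos (pow_pos hα0 2) (pow_pos hqpos 2)),
        pow_pos hα0 4]
    rw [hqs4]
    positivity
  · intro hqm
    have hqm' : α ^ 2 * q ^ 2 = 2 * ((1 + Ks / 2) * α ^ 2 - 1 - s) := by
      field_simp at hqm
      linarith [hqm]
    have hnum : α ^ 4 * (q ^ 4 - (4 * Ks + Ks ^ 2)) = -(4 * s * (α ^ 2 * q ^ 2)) := by
      linear_combination (α ^ 2 * q ^ 2 + 2 * ((1 + Ks / 2) * α ^ 2 - 1 - s) + 4 * s) * hqm'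
        - 4 * hs2
    have hneg : q ^ 4 - (4 * Ks + Ks ^ 2) < 0 := by
      nlinarith [hnum, mul_pos hs0 (mul_pos (pow_pos hα0 2) (pow_pos hqpos 2)),
        pow_pos hα0 4]
    rw [hqs4]
    apply div_neg_of_neg_of_pos _ hq3
    nlinarith [pow_pos hα0 3, hneg]
end

section
/- With the recursion and boundary conditions α̃_L = 1, β̃_L = 0, and defining T = 1/α̃_0, R = β̃_0/α̃_0 (assuming α̃_0 ≠ 0), one has |R|² + |T|² = 1. -/
/-!
The transfer step `(α, β) ↦ (α - c (α + β E), β + c (α Ē + β))` with `c` purely imaginary and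
`|E| = 1` preserves the indefinite form `|α|² - |β|²` (it is a `U(1,1)` map: flux is conserved).
Hence `|α̃₀|² - |β̃₀|² = |α̃_L|² - |β̃_L|² = 1`, and dividing by `|α̃₀|²` gives `|R|² + |T|² = 1`.
-/

open Complex ComplexConjugate

lemma normSq_sub_normSq_transferStep (t : ℝ) {E : ℂ} (hE : ‖E‖ = 1) (α β : ℂ) :
    normSq (α - I * t * (α + β * E)) - normSq (β + I * t * (α * conj E + β)) =
      normSq α - normSq β := by
  have hEE : E * conj E = 1 := by
    rw [mul_conj, normSq_eq_norm_sq, hE]; norm_num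
  apply ofReal_injective
  push_cast
  simp only [← mul_conj, map_sub, map_add, map_mul, conj_I, conj_conj, conj_ofReal]
  linear_combination ((I * t) ^ 2 * (α * conj α - β * conj β)) * hEE

lemma Int.apply_zero_eq_of_pred_eq {X : Type*} {f : ℤ → X} {L : ℤ} (hL : 0 ≤ L)
    (h : ∀ x : ℤ, 0 < x → x ≤ L → f (x - 1) = f x) : f 0 = f L := by
  suffices ∀ n : ℤ, 0 ≤ n → n ≤ L → f 0 = f n from this L hL le_rfl
  intro n hn
  induction n, hn using Int.leInduction with
  | base => exact fun _ ↦ rfl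
  | succ n hn ih =>
    intro hnL
    rw [ih (by omega), ← h (n + 1) (by omega) hnL, add_sub_cancel_right]

lemma norm_exp_neg_two_mul_I_mul (k x : ℝ) : ‖exp (-2 * I * k * x)‖ = 1 := by
  rw [show -2 * I * k * x = ((-2 * k * x : ℝ) : ℂ) * I by push_cast; ring]
  exact norm_exp_ofReal_mul_I _

lemma exp_two_mul_I_mul_eq_conj (k x : ℝ) :
    exp (2 * I * k * x) = conj (exp (-2 * I * k * x)) := by
  rw [← exp_conj]
  congr 1
  simp only [map_mul, map_neg, map_ofNat, conj_I, conj_ofReal]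
  ring

lemma norm_div_sq_add_norm_one_div_sq {α β : ℂ} (hα : α ≠ 0)
    (h : normSq α - normSq β = 1) : ‖β / α‖ ^ 2 + ‖1 / α‖ ^ 2 = 1 := by
  have hα' : normSq α ≠ 0 := normSq_eq_zero.not.mpr hα
  rw [Complex.sq_norm, Complex.sq_norm, map_div₀, map_div₀, normSq_one]
  field_simp
  linarith

theorem energy_conservation_matched_general (k ω : ℝ) (L : ℤ) (hL : 0 ≤ L) (m : ℤ → ℝ) (a b : ℤ → ℂ)
    (ha : ∀ x : ℤ, 0 < x → x ≤ L → a (x - 1) = a x -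
      (Complex.I * (ω:ℂ) ^ 2 / (2 * (Real.sin k : ℂ))) * (m x : ℂ) *
        (a x + b x * Complex.exp (-2 * Complex.I * (k : ℂ) * (x : ℂ))))
    (hb : ∀ x : ℤ, 0 < x → x ≤ L → b (x - 1) = b x +
      (Complex.I * (ω:ℂ) ^ 2 / (2 * (Real.sin k : ℂ))) * (m x : ℂ) *
        (a x * Complex.exp (2 * Complex.I * (k : ℂ) * (x : ℂ)) + b x))
    (haL : a L = 1) (hbL : b L = 0) (ha0 : a 0 ≠ 0) :
    ‖b 0 / a 0‖ ^ 2 + ‖1 / a 0‖ ^ 2 = 1 := by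
  have hcoeff : ∀ x : ℤ, I * (ω : ℂ) ^ 2 / (2 * (Real.sin k : ℂ)) * (m x : ℂ) =
      I * ((ω ^ 2 / (2 * Real.sin k) * m x : ℝ) : ℂ) := fun x ↦ by push_cast; ring
  have hflux : ∀ x : ℤ, 0 < x → x ≤ L →
      normSq (a (x - 1)) - normSq (b (x - 1)) = normSq (a x) - normSq (b x) := by
    intro x hx hxL
    have hE := norm_exp_neg_two_mul_I_mul k x
    have hconj := exp_two_mul_I_mul_eq_conj k x
    rw [ofReal_intCast] at hE hconj
    rw [ha x hx hxL, hb x hx hxL, hcoeff, hconj]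
    exact normSq_sub_normSq_transferStep _ hE _ _
  refine norm_div_sq_add_norm_one_div_sq ha0 ?_
  rw [Int.apply_zero_eq_of_pred_eq (f := fun x ↦ normSq (a x) - normSq (b x)) hL hflux, haL, hbL]
  simp

theorem energy_conservation_matched (k ω : ℝ) (hk : 0 < k) (hkπ : k < Real.pi)
    (hω : 0 < ω) (L : ℤ) (hL : 0 ≤ L) (m : ℤ → ℝ) (a b : ℤ → ℂ)
    (ha : ∀ x : ℤ, 0 < x → x ≤ L → a (x - 1) = a x -
      (Complex.I * (ω:ℂ) ^ 2 / (2 * (Real.sin k : ℂ))) * (m x : ℂ) *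
        (a x + b x * Complex.exp (-2 * Complex.I * (k : ℂ) * (x : ℂ))))
    (hb : ∀ x : ℤ, 0 < x → x ≤ L → b (x - 1) = b x +
      (Complex.I * (ω:ℂ) ^ 2 / (2 * (Real.sin k : ℂ))) * (m x : ℂ) *
        (a x * Complex.exp (2 * Complex.I * (k : ℂ) * (x : ℂ)) + b x))
    (haL : a L = 1) (hbL : b L = 0) (ha0 : a 0 ≠ 0) :
    ‖b 0 / a 0‖ ^ 2 + ‖1 / a 0‖ ^ 2 = 1 :=
  energy_conservation_matched_general k ω L hL m a b ha hb haL hbL ha0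
end

section
/- In the non-matched medium case with left mass perturbation Δ₀, the coefficients (α̃_x, β̃_x) of the backward recursion on 0 ≤ x ≤ L with terminal conditions α̃_L = e^{i(k₁-k)L}·(e^{ik₁} - e^{-ik})/(2i sin k), β̃_L = -e^{i(k₁+k)L}·(e^{ik₁} - e^{ik})/(2i sin k) satisfy |α̃_x|² - |β̃_x|² = sin k₁ / sin k for all 0 ≤ x ≤ L. -/
/-!
The backward recursion is a transfer map preserving the indefinite Hermitian form
`|α|² - |β|²`: since its coefficient `c` is purely imaginary the cross terms cancel, and since
the phase `e^{2ikx}` is unimodular so do the `|c|²` terms. The Wronskian is therefore constant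
on `[0, L]` and equals its value at `L`, where
`|e^{ik₁} - e^{-ik}|² - |e^{ik₁} - e^{ik}|² = 2 cos (k₁ - k) - 2 cos (k₁ + k) = 4 sin k₁ sin k`
is divided by `|2i sin k|² = 4 sin² k`.
-/

open Complex ComplexConjugate

theorem Int.apply_eq_apply_of_sub_one {α : Type*} (f : ℤ → α) {l u : ℤ}
    (h : ∀ x, l < x → x ≤ u → f (x - 1) = f x) : ∀ x, l ≤ x → x ≤ u → f x = f u := by
  intro x hlx hxu
  induction x, hxu using Int.leInductionDown with
  | base => rfl
  | pred y hyu ih => rw [h y (by omega) hyu, ih (by omega)]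

theorem Complex.sq_norm_exp_I_mul_sub_exp_I_mul (s t : ℝ) :
    ‖exp (I * s) - exp (I * t)‖ ^ 2 = 2 - 2 * Real.cos (s - t) := by
  simp only [Complex.sq_norm, normSq_apply, mul_comm I, sub_re, sub_im, exp_ofReal_mul_I_re,
    exp_ofReal_mul_I_im, Real.cos_sub]
  linear_combination Real.sin_sq_add_cos_sq s + Real.sin_sq_add_cos_sq t

theorem sq_norm_sub_sq_norm_eq_of_transfer_step {c E A B A' B' : ℂ}
    (hc : conj c = -c) (hE : E * conj E = 1)
    (hA' : A' = A - c * (A + B * conj E)) (hB' : B' = B + c * (A * E + B)) :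
    ‖A'‖ ^ 2 - ‖B'‖ ^ 2 = ‖A‖ ^ 2 - ‖B‖ ^ 2 := by
  apply ofReal_injective
  push_cast [← mul_conj']
  subst hA' hB'
  simp only [map_sub, map_add, map_mul, hc, conj_conj]
  linear_combination (c ^ 2 * (A * conj A - B * conj B)) * hE

theorem sq_norm_sub_sq_norm_eq_of_recursion_step (k ω μ x : ℝ) {A B A' B' : ℂ}
    (hA' : A' = A - (I * (ω : ℂ) ^ 2 / (2 * (Real.sin k : ℂ))) * (μ : ℂ) *
      (A + B * exp (-2 * I * (k : ℂ) * (x : ℂ))))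
    (hB' : B' = B + (I * (ω : ℂ) ^ 2 / (2 * (Real.sin k : ℂ))) * (μ : ℂ) *
      (A * exp (2 * I * (k : ℂ) * (x : ℂ)) + B)) :
    ‖A'‖ ^ 2 - ‖B'‖ ^ 2 = ‖A‖ ^ 2 - ‖B‖ ^ 2 := by
  have hconj : conj (exp (2 * I * (k : ℂ) * (x : ℂ))) = exp (-2 * I * (k : ℂ) * (x : ℂ)) := by
    rw [← exp_conj]; simp only [map_mul, map_ofNat, conj_I, conj_ofReal]; ring_nf
  refine sq_norm_sub_sq_norm_eq_of_transfer_step ?_ ?_ (hconj ▸ hA') hB'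
  · simp only [map_mul, map_div₀, map_pow, map_ofNat, conj_I, conj_ofReal]; ring
  · rw [mul_conj', show 2 * I * (k : ℂ) * (x : ℂ) = I * ↑(2 * k * x) by push_cast; ring,
      norm_exp_I_mul_ofReal, ofReal_one, one_pow]

theorem sq_norm_sub_sq_norm_terminal_eq (k k₁ L : ℝ) :
    ‖exp (I * ((k₁ : ℂ) - (k : ℂ)) * (L : ℂ)) *
        (exp (I * (k₁ : ℂ)) - exp (-I * (k : ℂ))) / (2 * I * (Real.sin k : ℂ))‖ ^ 2 -
      ‖-(exp (I * ((k₁ : ℂ) + (k : ℂ)) * (L : ℂ)) *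
        (exp (I * (k₁ : ℂ)) - exp (I * (k : ℂ))) / (2 * I * (Real.sin k : ℂ)))‖ ^ 2 =
      Real.sin k₁ / Real.sin k := by
  have hphase : ∀ s t : ℝ, I * ((s : ℂ) + (t : ℂ)) * (L : ℂ) = I * ↑((s + t) * L) := by
    intro s t; push_cast; ring
  rw [norm_neg, sub_eq_add_neg (k₁ : ℂ), ← ofReal_neg, neg_mul, ← mul_neg, ← ofReal_neg,
    hphase, hphase]
  simp only [norm_div, norm_mul, norm_exp_I_mul_ofReal, one_mul, div_pow, mul_pow,
    sq_norm_exp_I_mul_sub_exp_I_mul, norm_I, Complex.norm_ofNat, norm_real, Real.norm_eq_abs,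
    sq_abs, mul_one, sub_neg_eq_add, ← sub_div]
  rw [show 2 - 2 * Real.cos (k₁ + k) - (2 - 2 * Real.cos (k₁ - k)) =
      4 * (Real.sin k₁ * Real.sin k) by rw [Real.cos_add, Real.cos_sub]; ring,
    show (2 : ℝ) ^ 2 * Real.sin k ^ 2 = 4 * (Real.sin k * Real.sin k) by ring,
    mul_div_mul_left _ _ four_ne_zero, mul_div_assoc, div_self_mul_self', div_eq_mul_inv]

theorem wronskian_nonmatched_general (k k₁ ω : ℝ)
    (L : ℤ) (m : ℤ → ℝ) (a b : ℤ → ℂ)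
    (ha : ∀ x : ℤ, 0 < x → x ≤ L → a (x - 1) = a x -
      (Complex.I * (ω:ℂ) ^ 2 / (2 * (Real.sin k : ℂ))) * (m x : ℂ) *
        (a x + b x * Complex.exp (-2 * Complex.I * (k : ℂ) * (x : ℂ))))
    (hb : ∀ x : ℤ, 0 < x → x ≤ L → b (x - 1) = b x +
      (Complex.I * (ω:ℂ) ^ 2 / (2 * (Real.sin k : ℂ))) * (m x : ℂ) *
        (a x * Complex.exp (2 * Complex.I * (k : ℂ) * (x : ℂ)) + b x))
    (haL : a L = Complex.exp (Complex.I * ((k₁:ℂ) - (k:ℂ)) * (L:ℂ)) *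
      (Complex.exp (Complex.I * (k₁:ℂ)) - Complex.exp (-Complex.I * (k:ℂ))) /
        (2 * Complex.I * (Real.sin k : ℂ)))
    (hbL : b L = -(Complex.exp (Complex.I * ((k₁:ℂ) + (k:ℂ)) * (L:ℂ)) *
      (Complex.exp (Complex.I * (k₁:ℂ)) - Complex.exp (Complex.I * (k:ℂ))) /
        (2 * Complex.I * (Real.sin k : ℂ)))) :
    ∀ x : ℤ, 0 ≤ x → x ≤ L →
      ‖a x‖ ^ 2 - ‖b x‖ ^ 2 = Real.sin k₁ / Real.sin k := by
  intro x hx0 hxL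
  have hstep : ∀ y, 0 < y → y ≤ L → ‖a (y - 1)‖ ^ 2 - ‖b (y - 1)‖ ^ 2 = ‖a y‖ ^ 2 - ‖b y‖ ^ 2 :=
    fun y hy hyL => sq_norm_sub_sq_norm_eq_of_recursion_step k ω (m y) y
      (by exact_mod_cast ha y hy hyL) (by exact_mod_cast hb y hy hyL)
  rw [Int.apply_eq_apply_of_sub_one (fun y => ‖a y‖ ^ 2 - ‖b y‖ ^ 2) hstep x hx0 hxL, haL, hbL]
  exact_mod_cast sq_norm_sub_sq_norm_terminal_eq k k₁ L

theorem wronskian_nonmatched (k k₁ ω : ℝ)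
    (hk : 0 < k) (hkπ : k < Real.pi) (hk₁ : 0 < k₁) (hk₁π : k₁ < Real.pi)
    (hω : 0 < ω) (L : ℤ) (hL : 0 ≤ L) (m : ℤ → ℝ) (a b : ℤ → ℂ)
    (ha : ∀ x : ℤ, 0 < x → x ≤ L → a (x - 1) = a x -
      (Complex.I * (ω:ℂ) ^ 2 / (2 * (Real.sin k : ℂ))) * (m x : ℂ) *
        (a x + b x * Complex.exp (-2 * Complex.I * (k : ℂ) * (x : ℂ))))
    (hb : ∀ x : ℤ, 0 < x → x ≤ L → b (x - 1) = b x +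
      (Complex.I * (ω:ℂ) ^ 2 / (2 * (Real.sin k : ℂ))) * (m x : ℂ) *
        (a x * Complex.exp (2 * Complex.I * (k : ℂ) * (x : ℂ)) + b x))
    (haL : a L = Complex.exp (Complex.I * ((k₁:ℂ) - (k:ℂ)) * (L:ℂ)) *
      (Complex.exp (Complex.I * (k₁:ℂ)) - Complex.exp (-Complex.I * (k:ℂ))) /
        (2 * Complex.I * (Real.sin k : ℂ)))
    (hbL : b L = -(Complex.exp (Complex.I * ((k₁:ℂ) + (k:ℂ)) * (L:ℂ)) *
      (Complex.exp (Complex.I * (k₁:ℂ)) - Complex.exp (Complex.I * (k:ℂ))) /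
        (2 * Complex.I * (Real.sin k : ℂ)))) :
    ∀ x : ℤ, 0 ≤ x → x ≤ L →
      ‖a x‖ ^ 2 - ‖b x‖ ^ 2 = Real.sin k₁ / Real.sin k :=
  wronskian_nonmatched_general k k₁ ω L m a b ha hb haL hbL
end
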